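/- First variation formula: if f, p : ℝ → ℝ are continuously differentiable on [0, π/2], p(0) = 0, and both S(f) and ∫₀^{π/2} (p'(θ)² + p(θ)²/sin²θ)·sin θ dθ are finite, then the limit as ε → 0 of (S(f + ε·p) − S(f))/ε exists and equals 4π·∫₀^{π/2} [(f'(θ) − 1)·sin θ·p'(θ) + (f(θ)/sin θ − 1)·p(θ)] dθ. -/

import Mathlib

open Real Set Filter MeasureTheory


private lemma cross_bound (a b u w s : ℝ) (hs : 0 ≤ s) :
    |a * s * u + b * w * s| ≤ ((a^2 + b^2) * s) / 2 + ((u^2 + w^2) * s) / 2 := by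
  rw [abs_le]
  constructor <;>
    nlinarith [mul_nonneg (sq_nonneg (a - u)) hs, mul_nonneg (sq_nonneg (a + u)) hs,
      mul_nonneg (sq_nonneg (b - w)) hs, mul_nonneg (sq_nonneg (b + w)) hs]

/-- The stress functional, valued in `ℝ≥0∞` since it may be infinite. -/
noncomputable def stress (f : ℝ → ℝ) : ENNReal :=
  ∫⁻ θ in Set.Ioo (0 : ℝ) (Real.pi / 2),
    ENNReal.ofReal
      (((deriv f θ - 1) ^ 2 + (f θ / Real.sin θ - 1) ^ 2) * (2 * Real.pi * Real.sin θ))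

theorem first_variation_of_stress (f p : ℝ → ℝ)
    (hf : ContDiffOn ℝ 1 f (Set.Icc 0 (Real.pi / 2)))
    (hp : ContDiffOn ℝ 1 p (Set.Icc 0 (Real.pi / 2)))
    (hp0 : p 0 = 0)
    (hSf : stress f ≠ ⊤)
    (hIp : (∫⁻ θ in Set.Ioo (0 : ℝ) (Real.pi / 2),
        ENNReal.ofReal ((deriv p θ ^ 2 + p θ ^ 2 / Real.sin θ ^ 2) * Real.sin θ)) ≠ ⊤) :
    Filter.Tendsto
      (fun ε : ℝ =>
        ((stress (fun θ => f θ + ε * p θ)).toReal - (stress f).toReal) / ε)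
      (nhdsWithin 0 {(0 : ℝ)}ᶜ)
      (nhds (4 * Real.pi *
        ∫ θ in Set.Ioo (0 : ℝ) (Real.pi / 2),
          ((deriv f θ - 1) * Real.sin θ * deriv p θ
            + (f θ / Real.sin θ - 1) * p θ))) := by
  have hπ : (0:ℝ) < Real.pi := Real.pi_pos
  set I : Set ℝ := Set.Ioo (0 : ℝ) (Real.pi / 2) with hI
  set μ : Measure ℝ := volume.restrict I with hμ
  have hsin : ∀ θ ∈ I, 0 < Real.sin θ := fun θ hθ =>
    Real.sin_pos_of_pos_of_lt_pi hθ.1 (hθ.2.trans (half_lt_self hπ))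
  set A : ℝ → ℝ := fun θ =>
    ((deriv f θ - 1) ^ 2 + (f θ / Real.sin θ - 1) ^ 2) * (2 * Real.pi * Real.sin θ) with hA
  set B : ℝ → ℝ := fun θ =>
    (deriv p θ ^ 2 + p θ ^ 2 / Real.sin θ ^ 2) * Real.sin θ with hB
  set C : ℝ → ℝ := fun θ =>
    (deriv f θ - 1) * Real.sin θ * deriv p θ + (f θ / Real.sin θ - 1) * p θ with hC
  -- measurability
  have hIm : MeasurableSet I := measurableSet_Ioo
  have hfm : AEMeasurable f μ :=
    (hf.continuousOn.mono Set.Ioo_subset_Icc_self).aemeasurable hIm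
  have hpm : AEMeasurable p μ :=
    (hp.continuousOn.mono Set.Ioo_subset_Icc_self).aemeasurable hIm
  have hfdm : AEMeasurable (deriv f) μ := (measurable_deriv f).aemeasurable
  have hpdm : AEMeasurable (deriv p) μ := (measurable_deriv p).aemeasurable
  have hsm : AEMeasurable Real.sin μ := Real.continuous_sin.measurable.aemeasurable
  have hAm : AEMeasurable A μ := by
    apply AEMeasurable.mul
    · exact ((hfdm.sub aemeasurable_const).pow_const 2).add
        (((hfm.div hsm).sub aemeasurable_const).pow_const 2)
    · exact aemeasurable_const.mul hsm
  have hBm : AEMeasurable B μ := by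
    apply AEMeasurable.mul
    · exact (hpdm.pow_const 2).add ((hpm.pow_const 2).div (hsm.pow_const 2))
    · exact hsm
  have hCm : AEMeasurable C μ :=
    (((hfdm.sub aemeasurable_const).mul hsm).mul hpdm).add
      (((hfm.div hsm).sub aemeasurable_const).mul hpm)
  -- nonnegativity
  have hAnn : 0 ≤ᵐ[μ] A := ae_restrict_of_forall_mem hIm (fun θ hθ => by
    have := hsin θ hθ
    have h2 : (0:ℝ) ≤ 2 * Real.pi * Real.sin θ := by positivity
    exact mul_nonneg (by positivity) h2)
  have hBnn : 0 ≤ᵐ[μ] B := ae_restrict_of_forall_mem hIm (fun θ hθ => by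
    have := hsin θ hθ
    positivity)
  -- integrability of A and B
  have hAint : Integrable A μ := by
    refine ⟨hAm.aestronglyMeasurable, ?_⟩
    rw [hasFiniteIntegral_iff_ofReal hAnn]
    exact lt_of_le_of_ne le_top hSf
  have hBint : Integrable B μ := by
    refine ⟨hBm.aestronglyMeasurable, ?_⟩
    rw [hasFiniteIntegral_iff_ofReal hBnn]
    exact lt_of_le_of_ne le_top hIp
  -- integrability of C, via the pointwise bound |C| ≤ A/(4π) + B/2
  have hCbound : ∀ θ ∈ I, |C θ| ≤ (1/(4*Real.pi)) * A θ + (1/2) * B θ := by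
    intro θ hθ
    have hs : 0 < Real.sin θ := hsin θ hθ
    have h1 : C θ = (deriv f θ - 1) * Real.sin θ * deriv p θ
        + (f θ / Real.sin θ - 1) * (p θ / Real.sin θ) * Real.sin θ := by
      simp only [hC]
      field_simp
    have h2 : (1/(4*Real.pi)) * A θ
        = (((deriv f θ - 1)^2 + (f θ / Real.sin θ - 1)^2) * Real.sin θ) / 2 := by
      simp only [hA]
      field_simp
      ring
    have h3 : (1/2) * B θ
        = ((deriv p θ ^ 2 + (p θ / Real.sin θ)^2) * Real.sin θ) / 2 := by
      simp only [hB]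
      rw [← div_pow]
      ring
    rw [h1, h2, h3]
    exact cross_bound _ _ _ _ _ hs.le
  have hCint : Integrable C μ := by
    refine Integrable.mono' ((hAint.const_mul (1/(4*Real.pi))).add (hBint.const_mul (1/2)))
      hCm.aestronglyMeasurable ?_
    exact ae_restrict_of_forall_mem hIm (fun θ hθ => by
      simpa [Real.norm_eq_abs] using hCbound θ hθ)
  -- derivative of perturbed function
  have hderiv : ∀ (ε : ℝ), ∀ θ ∈ I, deriv (fun x => f x + ε * p x) θ
      = deriv f θ + ε * deriv p θ := by
    intro ε θ hθ
    have hmem : Set.Icc (0:ℝ) (Real.pi/2) ∈ nhds θ := Icc_mem_nhds hθ.1 hθ.2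
    have hfd : DifferentiableAt ℝ f θ := (hf.contDiffAt hmem).differentiableAt one_ne_zero
    have hpd : DifferentiableAt ℝ p θ := (hp.contDiffAt hmem).differentiableAt one_ne_zero
    rw [deriv_fun_add hfd (hpd.const_mul ε), deriv_const_mul ε hpd]
  -- pointwise expansion of the stress integrand
  have hexp : ∀ (ε : ℝ), ∀ θ ∈ I,
      ((deriv (fun x => f x + ε * p x) θ - 1) ^ 2
        + ((f θ + ε * p θ) / Real.sin θ - 1) ^ 2) * (2 * Real.pi * Real.sin θ)
      = A θ + ε * (4 * Real.pi * C θ) + ε^2 * (2 * Real.pi * B θ) := by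
    intro ε θ hθ
    have hs : 0 < Real.sin θ := hsin θ hθ
    rw [hderiv ε θ hθ]
    simp only [hA, hB, hC]
    have h1 : (f θ + ε * p θ) / Real.sin θ = f θ / Real.sin θ + ε * (p θ / Real.sin θ) := by
      field_simp
    have h2 : p θ ^ 2 / Real.sin θ ^ 2 = (p θ / Real.sin θ)^2 := by
      rw [div_pow]
    rw [h1, h2]
    have h3 : (f θ / Real.sin θ - 1) * p θ = (f θ / Real.sin θ - 1) * (p θ / Real.sin θ) * Real.sin θ := by
      field_simp
    rw [h3]
    ring
  -- the stress of perturbed function as a real integral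
  have hSval : ∀ ε : ℝ, (stress (fun θ => f θ + ε * p θ)).toReal
      = ∫ θ, A θ ∂μ + ε * (4 * Real.pi * ∫ θ, C θ ∂μ) + ε^2 * (2 * Real.pi * ∫ θ, B θ ∂μ) := by
    intro ε
    set G : ℝ → ℝ := fun θ => A θ + ε * (4 * Real.pi * C θ) + ε^2 * (2 * Real.pi * B θ) with hG
    have hGint : Integrable G μ :=
      (hAint.add ((hCint.const_mul (4*Real.pi)).const_mul ε)).add
        ((hBint.const_mul (2*Real.pi)).const_mul (ε^2))
    have hGnn : 0 ≤ᵐ[μ] G := ae_restrict_of_forall_mem hIm (fun θ hθ => by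
      rw [hG]
      simp only
      rw [← hexp ε θ hθ]
      have hs := hsin θ hθ
      have : (0:ℝ) ≤ 2 * Real.pi * Real.sin θ := by positivity
      positivity)
    have hkey : stress (fun θ => f θ + ε * p θ) = ENNReal.ofReal (∫ θ, G θ ∂μ) := by
      rw [MeasureTheory.ofReal_integral_eq_lintegral_ofReal hGint hGnn]
      unfold stress
      refine lintegral_congr_ae (ae_restrict_of_forall_mem hIm (fun θ hθ => ?_))
      simp only [hG]
      exact congrArg ENNReal.ofReal (hexp ε θ hθ)
    rw [hkey, ENNReal.toReal_ofReal (integral_nonneg_of_ae hGnn)]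
    have e1 : ∫ θ, G θ ∂μ
        = ∫ θ, (A θ + ((ε * (4*Real.pi)) * C θ + (ε^2 * (2*Real.pi)) * B θ)) ∂μ := by
      refine integral_congr_ae (Filter.EventuallyEq.of_eq (funext fun θ => ?_))
      simp only [hG]
      ring
    have hg2 : Integrable (fun θ => (ε * (4*Real.pi)) * C θ + (ε^2 * (2*Real.pi)) * B θ) μ :=
      (hCint.const_mul (ε * (4*Real.pi))).add (hBint.const_mul (ε^2 * (2*Real.pi)))
    rw [e1, integral_add hAint hg2,
      integral_add (hCint.const_mul (ε * (4*Real.pi))) (hBint.const_mul (ε^2 * (2*Real.pi))),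
      integral_const_mul, integral_const_mul]
    ring
  have hSfval : (stress f).toReal = ∫ θ, A θ ∂μ := by
    have hkey : stress f = ENNReal.ofReal (∫ θ, A θ ∂μ) := by
      rw [MeasureTheory.ofReal_integral_eq_lintegral_ofReal hAint hAnn]
      rfl
    rw [hkey, ENNReal.toReal_ofReal (integral_nonneg_of_ae hAnn)]
  -- conclude
  have heq : ∀ᶠ ε in nhdsWithin (0:ℝ) {(0:ℝ)}ᶜ,
      4 * Real.pi * ∫ θ, C θ ∂μ + ε * (2 * Real.pi * ∫ θ, B θ ∂μ)
      = ((stress (fun θ => f θ + ε * p θ)).toReal - (stress f).toReal) / ε := by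
    filter_upwards [self_mem_nhdsWithin] with ε hε
    have hε0 : ε ≠ 0 := hε
    rw [hSval ε, hSfval]
    field_simp
    ring
  have hLim : Filter.Tendsto
      (fun ε : ℝ => 4 * Real.pi * ∫ θ, C θ ∂μ + ε * (2 * Real.pi * ∫ θ, B θ ∂μ))
      (nhdsWithin 0 {(0:ℝ)}ᶜ) (nhds (4 * Real.pi * ∫ θ, C θ ∂μ)) := by
    have h : Filter.Tendsto
        (fun ε : ℝ => 4 * Real.pi * ∫ θ, C θ ∂μ + ε * (2 * Real.pi * ∫ θ, B θ ∂μ))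
        (nhds 0) (nhds (4 * Real.pi * ∫ θ, C θ ∂μ)) := by
      have h2 : Continuous (fun ε : ℝ =>
          4 * Real.pi * ∫ θ, C θ ∂μ + ε * (2 * Real.pi * ∫ θ, B θ ∂μ)) :=
        continuous_const.add (continuous_id.mul continuous_const)
      simpa using h2.tendsto (0:ℝ)
    exact h.mono_left nhdsWithin_le_nhds
  exact hLim.congr' heq
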